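/- For every n ≥ 1, all x_1,…,x_n, and every permutation σ of {1,…,n} with σ ≠ id, the fixed-boundary colored partition function at t = 0 vanishes: Z̃^σ_n(x_1,…,x_n|0) = 0. Consequently the free-boundary partition function at t = 0 equals the identity-permutation one: Z̃_n(x_1,…,x_n|0) = Z̃^{id}_n(x_1,…,x_n|0). -/

import Mathlib

open Finset

/-- `d(s_N, s_E)` = number of pairs `(i,j)` with `i < j`, `i ∈ s_E`, `j ∈ s_N ∪ s_E`. -/
def dNE {n : ℕ} (sN sE : Finset (Fin n)) : ℕ :=
  (Finset.univ.filter fun p : Fin n × Fin n => p.1 < p.2 ∧ p.1 ∈ sE ∧ p.2 ∈ sN ∪ sE).card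

/-- Colored vertex weight `w̃(s_W,s_S,s_N,s_E; x, t) = x^{|s_E|} t^{d(s_N,s_E)}` when the
configuration is admissible, and `0` otherwise. -/
def coloredVertexW {R : Type*} [CommRing R] {n : ℕ} (x t : R)
    (sW sS sN sE : Finset (Fin n)) : R :=
  if sS ∩ sW = ∅ ∧ sN ∩ sE = ∅ ∧ sN ∪ sE = sS ∪ sW then
    x ^ sE.card * t ^ dNE sN sE
  else 0

/-- Weight of a colored configuration on the `n × n` grid (rows bottom-to-top, row `i`
uses parameter `x i`). -/
def coloredConfigW {R : Type*} [CommRing R] {n : ℕ} (x : Fin n → R) (t : R)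
    (H : Fin n → Fin (n + 1) → Finset (Fin n))
    (V : Fin (n + 1) → Fin n → Finset (Fin n)) : R :=
  ∏ i : Fin n, ∏ j : Fin n,
    coloredVertexW (x i) t (H i j.castSucc) (V i.castSucc j) (V i.succ j) (H i j.succ)

/-- Fixed-boundary colored domain-wall partition function `Z̃^σ_n(x|t)`: color `i` enters
on the west boundary at the `i`-th horizontal edge from the top, the path of color `i`
exits the north boundary in column `σ(i)`, the south and east boundary edges carry no
colors. -/
def coloredZperm {R : Type*} [CommRing R] (n : ℕ) (x : Fin n → R) (t : R)
    (σ : Equiv.Perm (Fin n)) : R :=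
  ∑ c ∈ (Finset.univ : Finset ((Fin n → Fin (n + 1) → Finset (Fin n)) ×
        (Fin (n + 1) → Fin n → Finset (Fin n)))).filter
      (fun c => (∀ i : Fin n, c.1 i 0 = {Fin.rev i}) ∧
        (∀ i : Fin n, c.1 i (Fin.last n) = ∅) ∧
        (∀ j : Fin n, c.2 0 j = ∅) ∧
        (∀ a : Fin n, c.2 (Fin.last n) (σ a) = {a})),
    coloredConfigW x t c.1 c.2

/-- Free-boundary colored domain-wall partition function `Z̃_n(x|t)` (the north-boundary
coloring is free: exactly one color exits through each north vertical edge). -/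
def coloredZfree {R : Type*} [CommRing R] (n : ℕ) (x : Fin n → R) (t : R) : R :=
  ∑ c ∈ (Finset.univ : Finset ((Fin n → Fin (n + 1) → Finset (Fin n)) ×
        (Fin (n + 1) → Fin n → Finset (Fin n)))).filter
      (fun c => (∀ i : Fin n, c.1 i 0 = {Fin.rev i}) ∧
        (∀ i : Fin n, c.1 i (Fin.last n) = ∅) ∧
        (∀ j : Fin n, c.2 0 j = ∅) ∧
        (∀ j : Fin n, (c.2 (Fin.last n) j).card = 1)),
    coloredConfigW x t c.1 c.2

/-! At `t = 0` a vertex has nonzero weight only when `d(s_N, s_E) = 0`, i.e. when the east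
edge carries nothing but possibly the largest color present at the vertex. Tracing each color back
through a row to where it entered (from the south, or from the west boundary), one shows
by induction on the rows that the colors on the vertical edges of every level appear in
increasing order from left to right: a color overtaking a larger one would have to pass
east of it at the vertex where the larger one turns north. Every color reaches the north
boundary, so when each north edge carries one color, column `j` carries color `j`. -/

lemma le_of_dNE_eq_zero {n : ℕ} {sN sE : Finset (Fin n)} (h : dNE sN sE = 0)
    {c c' : Fin n} (hc : c ∈ sE) (hc' : c' ∈ sN ∪ sE) : c' ≤ c := by
  by_contra! hlt
  have hmem : (c, c') ∈ univ.filter fun p : Fin n × Fin n =>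
      p.1 < p.2 ∧ p.1 ∈ sE ∧ p.2 ∈ sN ∪ sE := by
    simp only [mem_filter, mem_univ, true_and]
    exact ⟨hlt, hc, hc'⟩
  rw [dNE, card_eq_zero] at h
  exact notMem_empty _ (h ▸ hmem)

def IsTZeroAdmissible {n : ℕ} (H : Fin n → Fin (n + 1) → Finset (Fin n))
    (V : Fin (n + 1) → Fin n → Finset (Fin n)) : Prop :=
  ∀ i j : Fin n, V i.succ j ∪ H i j.succ = V i.castSucc j ∪ H i j.castSucc ∧
    dNE (V i.succ j) (H i j.succ) = 0

lemma IsTZeroAdmissible.row {n : ℕ} {H : Fin n → Fin (n + 1) → Finset (Fin n)}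
    {V : Fin (n + 1) → Fin n → Finset (Fin n)} (hG : IsTZeroAdmissible H V) (i : Fin n) :
    ∀ j, V i.succ j ∪ H i j.succ = V i.castSucc j ∪ H i j.castSucc :=
  fun j => (hG i j).1

structure IsDomainWall {n : ℕ} (H : Fin n → Fin (n + 1) → Finset (Fin n))
    (V : Fin (n + 1) → Fin n → Finset (Fin n)) : Prop where
  west : ∀ i : Fin n, H i 0 = {Fin.rev i}
  east : ∀ i : Fin n, H i (Fin.last n) = ∅
  south : ∀ j : Fin n, V 0 j = ∅

section Weight

variable {R : Type*} [CommRing R] {n : ℕ}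

lemma coloredVertexW_zero_eq_zero (x : R) {sW sS sN sE : Finset (Fin n)}
    (h : ¬(sN ∪ sE = sS ∪ sW ∧ dNE sN sE = 0)) : coloredVertexW x 0 sW sS sN sE = 0 := by
  unfold coloredVertexW
  split_ifs with hadm
  · have hd : dNE sN sE ≠ 0 := fun hd => h ⟨hadm.2.2, hd⟩
    rw [zero_pow hd, mul_zero]
  · rfl

lemma isTZeroAdmissible_of_coloredConfigW_ne_zero (x : Fin n → R)
    {H : Fin n → Fin (n + 1) → Finset (Fin n)} {V : Fin (n + 1) → Fin n → Finset (Fin n)}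
    (hw : coloredConfigW x 0 H V ≠ 0) : IsTZeroAdmissible H V := by
  intro i j
  by_contra h
  exact hw <| prod_eq_zero (mem_univ i) <| prod_eq_zero (mem_univ j) <|
    coloredVertexW_zero_eq_zero (x i) h

end Weight

namespace Row

/-! A row of `n` vertices: horizontal edges `h 0, …, h n` from west to east, south edges `s`
and north edges `t`. -/

variable {α : Type*} [DecidableEq α] {n : ℕ} {h : Fin (n + 1) → Finset α}
  {s t : Fin n → Finset α} {a : α} (hrow : ∀ j, t j ∪ h j.succ = s j ∪ h j.castSucc)
include hrow

lemma exists_mem_north_of_mem_horizontal (hlast : h (Fin.last n) = ∅) (e : Fin (n + 1))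
    (ha : a ∈ h e) : ∃ k, a ∈ t k := by
  induction e using Fin.reverseInduction with
  | last => simp [hlast] at ha
  | cast j ih =>
    have : a ∈ t j ∪ h j.succ := hrow j ▸ mem_union_right _ ha
    rcases mem_union.mp this with hN | hE
    · exact ⟨j, hN⟩
    · exact ih hE

lemma exists_mem_north_of_mem_south (hlast : h (Fin.last n) = ∅) {j : Fin n} (ha : a ∈ s j) :
    ∃ k, a ∈ t k := by
  have : a ∈ t j ∪ h j.succ := hrow j ▸ mem_union_left _ ha
  rcases mem_union.mp this with hN | hE
  · exact ⟨j, hN⟩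
  · exact exists_mem_north_of_mem_horizontal hrow hlast _ hE

lemma source_of_mem_horizontal (e : Fin (n + 1)) (ha : a ∈ h e) :
    (∃ m : Fin n, m.castSucc < e ∧ a ∈ s m ∧ ∀ k, m.castSucc < k → k ≤ e → a ∈ h k) ∨
      ∀ k ≤ e, a ∈ h k := by
  induction e using Fin.induction with
  | zero =>
    exact Or.inr fun k hk => (nonpos_iff_eq_zero.mp hk) ▸ ha
  | succ j ih =>
    have : a ∈ s j ∪ h j.castSucc := hrow j ▸ mem_union_right _ ha
    have hextend : ∀ k, k ≤ j.succ → k ≤ j.castSucc ∨ k = j.succ := fun k hk => by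
      rcases hk.lt_or_eq with hlt | heq
      · exact Or.inl (Fin.le_castSucc_iff.mpr hlt)
      · exact Or.inr heq
    rcases mem_union.mp this with hS | hW
    · refine Or.inl ⟨j, Fin.castSucc_lt_succ, hS, fun k hjk hk => ?_⟩
      rcases hextend k hk with hk | rfl
      · exact absurd hjk (not_lt.mpr hk)
      · exact ha
    · rcases ih hW with ⟨m, hm, hmS, hpath⟩ | hpath
      · refine Or.inl ⟨m, hm.trans Fin.castSucc_lt_succ, hmS, fun k hmk hk => ?_⟩
        rcases hextend k hk with hk | rfl
        · exact hpath k hmk hk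
        · exact ha
      · refine Or.inr fun k hk => ?_
        rcases hextend k hk with hk | rfl
        · exact hpath k hk
        · exact ha

lemma source_of_mem_north {j : Fin n} (ha : a ∈ t j) :
    (∃ m ≤ j, a ∈ s m ∧ ∀ k, m.castSucc < k → k ≤ j.castSucc → a ∈ h k) ∨
      ∀ k ≤ j.castSucc, a ∈ h k := by
  have : a ∈ s j ∪ h j.castSucc := hrow j ▸ mem_union_left _ ha
  rcases mem_union.mp this with hS | hW
  · exact Or.inl ⟨j, le_rfl, hS, fun k hjk hk => absurd hjk (not_lt.mpr hk)⟩
  · rcases source_of_mem_horizontal hrow _ hW with ⟨m, hm, hmS, hpath⟩ | hpath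
    · exact Or.inl ⟨m, (Fin.castSucc_lt_castSucc_iff.mp hm).le, hmS, hpath⟩
    · exact Or.inr hpath

end Row

section Grid

variable {n : ℕ} {H : Fin n → Fin (n + 1) → Finset (Fin n)}
  {V : Fin (n + 1) → Fin n → Finset (Fin n)}
  (hG : IsTZeroAdmissible H V) (hB : IsDomainWall H V)
include hG hB

/-- Row `i` (from the bottom) brings in color `n - 1 - i`, so the colors present at level `l`
are the `l` largest ones. -/
lemma le_add_of_mem_V {a : Fin n} {l : Fin (n + 1)} {j : Fin n} (ha : a ∈ V l j) :
    n ≤ (a : ℕ) + l := by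
  induction l using Fin.induction generalizing j with
  | zero => simp [hB.south] at ha
  | succ i ih =>
    rcases Row.source_of_mem_north (hG.row i) ha with ⟨m, -, hm, -⟩ | hpath
    · have := ih hm
      simp only [Fin.val_succ, Fin.val_castSucc] at this ⊢
      omega
    · have := hpath 0 (Fin.zero_le _)
      rw [hB.west, mem_singleton] at this
      subst this
      simp only [Fin.val_rev, Fin.val_succ]
      omega

lemma exists_mem_V_of_le_add {a : Fin n} {l : Fin (n + 1)} (hl : n ≤ (a : ℕ) + l) :
    ∃ j, a ∈ V l j := by
  induction l using Fin.induction with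
  | zero =>
    simp only [Fin.val_zero, add_zero] at hl
    exact absurd a.isLt (not_lt.mpr hl)
  | succ i ih =>
    rcases Nat.lt_or_ge ((a : ℕ) + i) n with hlt | hge
    · have ha : a = Fin.rev i := Fin.ext (by rw [Fin.val_rev]; rw [Fin.val_succ] at hl; omega)
      have : a ∈ H i 0 := by simp [hB.west, ha]
      exact Row.exists_mem_north_of_mem_horizontal (hG.row i) (hB.east i) 0 this
    · obtain ⟨j, hj⟩ := ih hge
      exact Row.exists_mem_north_of_mem_south (hG.row i) (hB.east i) hj

lemma le_of_mem_V_of_lt {l : Fin (n + 1)} {c c' j j' : Fin n} (hcc' : c < c')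
    (hc : c ∈ V l j) (hc' : c' ∈ V l j') : j ≤ j' := by
  induction l using Fin.induction generalizing c c' j j' with
  | zero => simp [hB.south] at hc
  | succ i ih =>
    by_contra! hj'j
    -- `c` crosses the east edge of vertex `(i, j')`, where the larger `c'` leaves north.
    suffices hE : c ∈ H i j'.succ from
      absurd hcc' (not_lt.mpr (le_of_dNE_eq_zero (hG i j').2 hE (mem_union_left _ hc')))
    have hj'j' : j'.succ ≤ j.castSucc := Fin.succ_le_castSucc_iff.mpr hj'j
    rcases Row.source_of_mem_north (hG.row i) hc with ⟨m, -, hm, hpath⟩ | hpath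
    · refine hpath _ ?_ hj'j'
      by_contra! hmj'
      have hj'm : j' < m := Fin.succ_le_castSucc_iff.mp hmj'
      rcases Row.source_of_mem_north (hG.row i) hc' with ⟨m', hm'j', hm', -⟩ | hpath'
      · exact absurd (ih hcc' hm hm') (not_le.mpr (hm'j'.trans_lt hj'm))
      · have hc'rev := hpath' 0 (Fin.zero_le _)
        rw [hB.west, mem_singleton] at hc'rev
        have := le_add_of_mem_V hG hB hm
        rw [hc'rev, Fin.lt_def, Fin.val_rev] at hcc'
        simp only [Fin.val_castSucc] at this
        omega
    · exact hpath _ hj'j'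

lemma north_eq_singleton_self (hcard : ∀ j, (V (Fin.last n) j).card = 1) (j : Fin n) :
    V (Fin.last n) j = {j} := by
  choose f hf using fun a : Fin n =>
    exists_mem_V_of_le_add hG hB (a := a) (l := Fin.last n) (by simp)
  have hinj : Function.Injective f := fun a b hab =>
    card_le_one_iff.mp (hcard (f b)).le (hab ▸ hf a) (hf b)
  have hmono : Monotone f := fun a b hab => by
    rcases hab.lt_or_eq with hlt | rfl
    · exact le_of_mem_V_of_lt hG hB hlt (hf a) (hf b)
    · rfl
  have hj : j ∈ V (Fin.last n) j := by
    simpa only [(hmono.strictMono_of_injective hinj).apply_eq] using hf j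
  obtain ⟨y, hy⟩ := card_eq_one.mp (hcard j)
  rw [hy, mem_singleton] at hj
  rw [hy, hj]

end Grid

lemma north_eq_singleton_self_of_coloredConfigW_ne_zero {R : Type*} [CommRing R] {n : ℕ}
    {x : Fin n → R} {H : Fin n → Fin (n + 1) → Finset (Fin n)}
    {V : Fin (n + 1) → Fin n → Finset (Fin n)} (hB : IsDomainWall H V)
    (hcard : ∀ j, (V (Fin.last n) j).card = 1) (hw : coloredConfigW x 0 H V ≠ 0) (j : Fin n) :
    V (Fin.last n) j = {j} :=
  north_eq_singleton_self (isTZeroAdmissible_of_coloredConfigW_ne_zero x hw) hB hcard j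

theorem coloredZ_t_zero {R : Type*} [CommRing R] (n : ℕ) (x : Fin n → R) :
    (∀ σ : Equiv.Perm (Fin n), σ ≠ 1 → coloredZperm n x 0 σ = 0) ∧
    coloredZfree n x 0 = coloredZperm n x 0 1 := by
  refine ⟨fun σ hσ => sum_eq_zero fun c hc => ?_, (sum_subset ?_ fun c hc hc1 => ?_).symm⟩
  · obtain ⟨-, hW, hE, hS, hσc⟩ := mem_filter.mp hc
    by_contra hw
    have hcard : ∀ j, (c.2 (Fin.last n) j).card = 1 := fun j => by
      rw [← σ.apply_symm_apply j, hσc, card_singleton]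
    have hnorth := north_eq_singleton_self_of_coloredConfigW_ne_zero ⟨hW, hE, hS⟩ hcard hw
    exact hσ (Equiv.ext fun a => (singleton_injective ((hσc a).symm.trans (hnorth (σ a)))).symm)
  · intro c hc
    obtain ⟨-, hW, hE, hS, hc1⟩ := mem_filter.mp hc
    exact mem_filter.mpr ⟨mem_univ _, hW, hE, hS,
      fun j => by rw [← Equiv.Perm.one_apply j, hc1, card_singleton]⟩
  · obtain ⟨-, hW, hE, hS, hcard⟩ := mem_filter.mp hc
    by_contra hw
    exact hc1 (mem_filter.mpr ⟨mem_univ _, hW, hE, hS,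
      north_eq_singleton_self_of_coloredConfigW_ne_zero ⟨hW, hE, hS⟩ hcard hw⟩)
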